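/- arXiv:2603.13048 — 4 statements merged into one kernel-verified Lean document; each statement's English description precedes it below -/
import Mathlib

section
/- Under the Setup and Assumptions (A1), (A2), (A3), (A4), for every γ > 0 and λ > 0 and all (β,θ): ⟨ D_θ(β,θ), Γ_θ(β,θ) ⟩ ≤ − γ ( λ/M − 2 L̄_Ψ² L_{∇g} ) Q(β,θ), where D_θ(β,θ) = − ∫ ∇_θ Ψ(x,θ) [ ∇²g(Ψ(x,θ)) + λ I ] (F(x,β) − Ψ(x,θ)) μ(dx) is the θ-gradient of the Lyapunov function and Γ_θ(β,θ) = γ ∫ ∇_θ Ψ(x,θ) (F(x,β) − Ψ(x,θ)) μ(dx) is the θ-component of the expected direction of the method. -/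
open MeasureTheory ProbabilityTheory RealInnerProductSpace

noncomputable section

/-- Euclidean space `ℝ^n`. -/
abbrev E (n : ℕ) : Type := EuclideanSpace ℝ (Fin n)

/-- The transposed Jacobian (gradient matrix) of `φ` at `x`, acting as a linear map. -/
noncomputable def tJac {n m : ℕ} (φ : E n → E m) (x : E n) : E m →L[ℝ] E n :=
  ContinuousLinearMap.adjoint (fderiv ℝ φ x)

/-- `F(x,β) = ∫ f(x,y,β) κ(x)(dy)`, the conditional expectation model. -/
noncomputable def condF {nX nY nb nf : ℕ} (κ : Kernel (E nX) (E nY))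
    (f : E nX → E nY → E nb → E nf) (x : E nX) (β : E nb) : E nf :=
  ∫ y, f x y β ∂(κ x)

/-- The tracking error `Q(β,θ) = (1/2) ∫ ‖F(x,β) − Ψ(x,θ)‖² μ(dx)`. -/
noncomputable def Qerr {nX nb nt nf : ℕ} (μ : Measure (E nX))
    (F : E nX → E nb → E nf) (Ψ : E nX → E nt → E nf) (β : E nb) (θ : E nt) : ℝ :=
  (1 / 2) * ∫ x, ‖F x β - Ψ x θ‖ ^ 2 ∂μ

/-!
Write `v = F(·,β) − Ψ(·,θ)`, `A = ∇_θΨ(·,θ)`, `a = ∫ A ∇²g(Ψ) v` and `b = ∫ A v`, so that the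
left-hand side is `−γ (⟪a, b⟫ + λ ‖b‖²)`. The Łojasiewicz condition bounds `−λ ‖b‖²` by
`−(λ/M) Q`. Both `‖a‖ / L_{∇g}` and `‖b‖` are at most `∫ L_Ψ ‖v‖`, whose square is at most
`L̄_Ψ² ∫ ‖v‖² = 2 L̄_Ψ² Q` by Cauchy–Schwarz, which bounds `−⟪a, b⟫` by `2 L̄_Ψ² L_{∇g} Q`.
Square integrability of `F(·,β)` comes from Jensen's inequality `‖∫ f dκ(x)‖² ≤ ∫ ‖f‖² dκ(x)`.
-/

section Integral

variable {α β F : Type*} [MeasurableSpace α] [MeasurableSpace β] {μ : Measure α}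
  [NormedAddCommGroup F] [NormedSpace ℝ F] [CompleteSpace F]

lemma norm_integral_sq_le_integral_norm_sq [IsProbabilityMeasure μ] {h : α → F}
    (hh : MemLp h 2 μ) : ‖∫ a, h a ∂μ‖ ^ 2 ≤ ∫ a, ‖h a‖ ^ 2 ∂μ :=
  ((convexOn_norm convex_univ).pow (fun _ _ => norm_nonneg _) 2).map_integral_le
    (continuous_norm.pow 2).continuousOn isClosed_univ (.of_forall fun _ => trivial)
    (hh.integrable one_le_two) ((memLp_two_iff_integrable_sq_norm hh.1).1 hh)

lemma memLp_two_integral_kernel [SFinite μ] {κ : Kernel α β} [IsMarkovKernel κ]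
    {f : α × β → F} (hf : MemLp f 2 (μ ⊗ₘ κ)) :
    MemLp (fun x => ∫ y, f (x, y) ∂κ x) 2 μ := by
  have hm : AEStronglyMeasurable (fun x => ∫ y, f (x, y) ∂κ x) μ := by
    simpa using hf.1.integral_kernel_compProd (κ := Kernel.const Unit μ)
      (η := Kernel.prodMkLeft Unit κ) (a := ())
  have hsq := (memLp_two_iff_integrable_sq_norm hf.1).1 hf
  obtain ⟨hsec, hint⟩ := (Measure.integrable_compProd_iff hsq.1).1 hsq
  refine (memLp_two_iff_integrable_sq_norm hm).2 (hint.mono' (hm.norm.pow 2) ?_)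
  filter_upwards [hsec, hf.1.compProd_mk_left] with x hx hxm
  simp only [norm_pow, norm_norm]
  exact norm_integral_sq_le_integral_norm_sq ((memLp_two_iff_integrable_sq_norm hxm).2 hx)

lemma sq_integral_mul_le_integral_sq_mul_integral_sq {f g : α → ℝ} (hf0 : 0 ≤ᵐ[μ] f)
    (hg0 : 0 ≤ᵐ[μ] g) (hf : MemLp f 2 μ) (hg : MemLp g 2 μ) :
    (∫ a, f a * g a ∂μ) ^ 2 ≤ (∫ a, f a ^ 2 ∂μ) * ∫ a, g a ^ 2 ∂μ := by
  have h := integral_mul_le_Lp_mul_Lq_of_nonneg Real.HolderConjugate.two_two hf0 hg0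
    (by simpa using hf) (by simpa using hg)
  simp only [Real.rpow_two, ← Real.sqrt_eq_rpow] at h
  have hfg0 : 0 ≤ ∫ a, f a * g a ∂μ :=
    integral_nonneg_of_ae (by filter_upwards [hf0, hg0] with a ha hb using mul_nonneg ha hb)
  calc (∫ a, f a * g a ∂μ) ^ 2 ≤ (√(∫ a, f a ^ 2 ∂μ) * √(∫ a, g a ^ 2 ∂μ)) ^ 2 :=
        pow_le_pow_left₀ hfg0 h 2
    _ = (∫ a, f a ^ 2 ∂μ) * ∫ a, g a ^ 2 ∂μ := by
      rw [mul_pow, Real.sq_sqrt (integral_nonneg fun _ => sq_nonneg _),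
        Real.sq_sqrt (integral_nonneg fun _ => sq_nonneg _)]

end Integral

section Descent

variable {F : Type*} [NormedAddCommGroup F] [InnerProductSpace ℝ F]

lemma inner_neg_add_smul_le {a b : F} {s c K B M γ lam : ℝ} (ha : ‖a‖ ≤ c * s)
    (hb : ‖b‖ ≤ s) (hs : s ^ 2 ≤ K * B) (hc : 0 ≤ c) (hB : 0 ≤ B)
    (hLoj : 1 / 2 * B ≤ M * ‖b‖ ^ 2) (hγ : 0 ≤ γ) (hlam : 0 ≤ lam) :
    ⟪-(a + lam • b), γ • b⟫ ≤ -(γ * (lam / M - 2 * K * c)) * (1 / 2 * B) := by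
  have hab : -⟪a, b⟫ ≤ c * (K * B) :=
    calc -⟪a, b⟫ ≤ ‖a‖ * ‖b‖ := (neg_le_abs _).trans (abs_real_inner_le_norm a b)
      _ ≤ c * s * s :=
          mul_le_mul ha hb (norm_nonneg b) (mul_nonneg hc ((norm_nonneg b).trans hb))
      _ = c * s ^ 2 := by ring
      _ ≤ c * (K * B) := mul_le_mul_of_nonneg_left hs hc
  have hdesc : 1 / 2 * B / M ≤ ‖b‖ ^ 2 := by
    rcases le_or_gt 0 M with hM | hM
    · exact div_le_of_le_mul₀ hM (sq_nonneg _) (hLoj.trans_eq (mul_comm _ _))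
    · exact (div_nonpos_of_nonneg_of_nonpos (by positivity) hM.le).trans (sq_nonneg _)
  have hexpand : ⟪-(a + lam • b), γ • b⟫ = γ * (-⟪a, b⟫ - lam * ‖b‖ ^ 2) := by
    rw [inner_neg_left, real_inner_smul_right, inner_add_left, real_inner_smul_left,
      real_inner_self_eq_norm_sq]
    ring
  have hbracket : -⟪a, b⟫ - lam * ‖b‖ ^ 2 ≤ -(lam / M - 2 * K * c) * (1 / 2 * B) := by
    have := mul_le_mul_of_nonneg_left hdesc hlam
    have e : lam * (1 / 2 * B / M) = lam / M * (1 / 2 * B) := by ring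
    linarith
  rw [hexpand]
  linarith [mul_le_mul_of_nonneg_left hbracket hγ]

variable {α G : Type*} [MeasurableSpace α] {μ : Measure α}
  [NormedAddCommGroup G] [InnerProductSpace ℝ G]

theorem inner_integral_descent_le [IsProbabilityMeasure μ]
    {A : α → F →L[ℝ] G} {H : α → F →L[ℝ] F} {v : α → F} {L : α → ℝ} {c K M γ lam : ℝ}
    (hA : AEStronglyMeasurable A μ) (hH : AEStronglyMeasurable H μ) (hv : MemLp v 2 μ)
    (hL : MemLp L 2 μ) (hAL : ∀ x, ‖A x‖ ≤ L x) (hHc : ∀ x, ‖H x‖ ≤ c)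
    (hK : ∫ x, L x ^ 2 ∂μ ≤ K)
    (hLoj : 1 / 2 * ∫ x, ‖v x‖ ^ 2 ∂μ ≤ M * ‖∫ x, A x (v x) ∂μ‖ ^ 2)
    (hγ : 0 ≤ γ) (hlam : 0 ≤ lam) :
    ⟪-∫ x, A x (H x (v x) + lam • v x) ∂μ, γ • ∫ x, A x (v x) ∂μ⟫ ≤
      -(γ * (lam / M - 2 * K * c)) * (1 / 2 * ∫ x, ‖v x‖ ^ 2 ∂μ) := by
  have hL0 : ∀ x, 0 ≤ L x := fun x => (norm_nonneg _).trans (hAL x)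
  have hc : 0 ≤ c := (norm_nonneg _).trans (hHc (nonempty_of_isProbabilityMeasure μ).some)
  have hLv : Integrable (fun x => L x * ‖v x‖) μ := hL.integrable_mul hv.norm
  have hAv : ∀ x, ‖A x (v x)‖ ≤ L x * ‖v x‖ := fun x => (A x).le_of_opNorm_le (hAL x) _
  have hAHv : ∀ x, ‖A x (H x (v x))‖ ≤ c * (L x * ‖v x‖) := fun x =>
    calc ‖A x (H x (v x))‖ ≤ L x * (c * ‖v x‖) :=
          (A x).le_of_opNorm_le (hAL x) _ |>.trans
            (mul_le_mul_of_nonneg_left ((H x).le_of_opNorm_le (hHc x) _) (hL0 x))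
      _ = c * (L x * ‖v x‖) := by ring
  have hAv_meas := isBoundedBilinearMap_apply.continuous.comp_aestronglyMeasurable₂ hA hv.1
  have hHv_meas := isBoundedBilinearMap_apply.continuous.comp_aestronglyMeasurable₂ hH hv.1
  have hAHv_meas := isBoundedBilinearMap_apply.continuous.comp_aestronglyMeasurable₂ hA hHv_meas
  have hAv_int : Integrable (fun x => A x (v x)) μ := hLv.mono' hAv_meas (.of_forall hAv)
  have hAHv_int : Integrable (fun x => A x (H x (v x))) μ :=
    (hLv.const_mul c).mono' hAHv_meas (.of_forall hAHv)
  have hsplit : ∫ x, A x (H x (v x) + lam • v x) ∂μ =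
      ∫ x, A x (H x (v x)) ∂μ + lam • ∫ x, A x (v x) ∂μ := by
    have hsmul : Integrable (fun x => lam • A x (v x)) μ := hAv_int.smul lam
    simp only [map_add, map_smul]
    rw [integral_add hAHv_int hsmul, integral_smul]
  rw [hsplit]
  refine inner_neg_add_smul_le (s := ∫ x, L x * ‖v x‖ ∂μ) ?_
    (norm_integral_le_of_norm_le hLv (.of_forall hAv)) ?_ hc
    (integral_nonneg fun _ => sq_nonneg _) hLoj hγ hlam
  · rw [← integral_const_mul]
    exact norm_integral_le_of_norm_le (hLv.const_mul c) (.of_forall hAHv)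
  · calc (∫ x, L x * ‖v x‖ ∂μ) ^ 2 ≤ (∫ x, L x ^ 2 ∂μ) * ∫ x, ‖v x‖ ^ 2 ∂μ :=
          sq_integral_mul_le_integral_sq_mul_integral_sq (.of_forall hL0)
            (.of_forall fun _ => norm_nonneg _) hL hv.norm
      _ ≤ K * ∫ x, ‖v x‖ ^ 2 ∂μ :=
          mul_le_mul_of_nonneg_right hK (integral_nonneg fun _ => sq_nonneg _)

end Descent

theorem statement9_general {nX nY nb nt nf : ℕ}
    (μ : Measure (E nX)) [IsProbabilityMeasure μ]
    (κ : Kernel (E nX) (E nY)) [IsMarkovKernel κ]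
    (f : E nX → E nY → E nb → E nf)
    (hfm : Measurable (fun q : (E nX × E nY) × E nb => f q.1.1 q.1.2 q.2))
    (Ψ : E nX → E nt → E nf)
    (hΨm : Measurable (fun q : E nX × E nt => Ψ q.1 q.2))
    (hDΨm : ∀ θ : E nt, AEStronglyMeasurable (fun x => tJac (Ψ x) θ) μ)
    -- Assumption (A1)
    (g : E nf → ℝ) (Ldg : ℝ)
    (hgH : ∀ u : E nf, ‖fderiv ℝ (gradient g) u‖ ≤ Ldg)
    -- Assumption (A2)
    (Lf Ldf : E nX × E nY → ℝ) (Lbf Lbdf Cf : ℝ)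
    (hMomf : ∀ p ∈ ({2, 4} : Set ℕ),
      (Integrable (fun z => Lf z ^ p) (μ ⊗ₘ κ) ∧ ∫ z, Lf z ^ p ∂(μ ⊗ₘ κ) ≤ Lbf ^ p) ∧
      (∀ β : E nb, Integrable (fun z : E nX × E nY => ‖f z.1 z.2 β‖ ^ p) (μ ⊗ₘ κ) ∧
          ∫ z : E nX × E nY, ‖f z.1 z.2 β‖ ^ p ∂(μ ⊗ₘ κ) ≤ Cf ^ p) ∧
      (Integrable (fun z => Ldf z ^ p) (μ ⊗ₘ κ) ∧ ∫ z, Ldf z ^ p ∂(μ ⊗ₘ κ) ≤ Lbdf ^ p))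
    -- Assumption (A3)
    (LΨ LdΨ : E nX → ℝ) (LbΨ LbdΨ CΨ : ℝ)
    (hLΨm : Measurable LΨ)
    (hΨB : ∀ x (θ : E nt), ‖tJac (Ψ x) θ‖ ≤ LΨ x)
    (hMomΨ : ∀ p ∈ ({2, 4} : Set ℕ),
      (Integrable (fun x => LΨ x ^ p) μ ∧ ∫ x, LΨ x ^ p ∂μ ≤ LbΨ ^ p) ∧
      (∀ θ : E nt, Integrable (fun x => ‖Ψ x θ‖ ^ p) μ ∧ ∫ x, ‖Ψ x θ‖ ^ p ∂μ ≤ CΨ ^ p) ∧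
      (Integrable (fun x => LdΨ x ^ p) μ ∧ ∫ x, LdΨ x ^ p ∂μ ≤ LbdΨ ^ p))
    -- Assumption (A4): stochastic Łojasiewicz condition
    (M : ℝ)
    (hLoj : ∀ (β : E nb) (θ : E nt),
      Qerr μ (condF κ f) Ψ β θ ≤
        M * ‖∫ x, tJac (Ψ x) θ (condF κ f x β - Ψ x θ) ∂μ‖ ^ 2)

    (γ lam : ℝ) (hγ : 0 < γ) (hlam : 0 < lam) (β : E nb) (θ : E nt) :
    ⟪-∫ x, tJac (Ψ x) θ (fderiv ℝ (gradient g) (Ψ x θ) (condF κ f x β - Ψ x θ)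
          + lam • (condF κ f x β - Ψ x θ)) ∂μ,
      γ • ∫ x, tJac (Ψ x) θ (condF κ f x β - Ψ x θ) ∂μ⟫ ≤
    -(γ * (lam / M - 2 * LbΨ ^ 2 * Ldg)) * Qerr μ (condF κ f) Ψ β θ := by
  have hΨθm : Measurable fun x => Ψ x θ := hΨm.comp (measurable_id.prodMk measurable_const)
  have hfβm : Measurable fun z : E nX × E nY => f z.1 z.2 β :=
    hfm.comp (measurable_id.prodMk measurable_const)
  have hF : MemLp (fun x => condF κ f x β) 2 μ :=
    memLp_two_integral_kernel ((memLp_two_iff_integrable_sq_norm hfβm.aestronglyMeasurable).2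
      ((hMomf 2 (by simp)).2.1 β).1)
  have hΨθ : MemLp (fun x => Ψ x θ) 2 μ :=
    (memLp_two_iff_integrable_sq_norm hΨθm.aestronglyMeasurable).2 ((hMomΨ 2 (by simp)).2.1 θ).1
  have hLΨ : MemLp LΨ 2 μ :=
    (memLp_two_iff_integrable_sq hLΨm.aestronglyMeasurable).2 (hMomΨ 2 (by simp)).1.1
  have hH : AEStronglyMeasurable (fun x => fderiv ℝ (gradient g) (Ψ x θ)) μ :=
    ((measurable_fderiv ℝ _).comp hΨθm).aestronglyMeasurable
  have hv : MemLp (fun x => condF κ f x β - Ψ x θ) 2 μ := hF.sub hΨθ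
  exact inner_integral_descent_le (hDΨm θ) hH hv hLΨ
    (fun x => hΨB x θ) (fun x => hgH _) (hMomΨ 2 (by simp)).1.2 (hLoj β θ) hγ.le hlam.le

/-- the θ-descent estimate in the proof of Lemma 4.3 of the paper,
under (A1)–(A4). -/
theorem statement9 {nX nY nb nt nf : ℕ}
    (μ : Measure (E nX)) [IsProbabilityMeasure μ]
    (κ : Kernel (E nX) (E nY)) [IsMarkovKernel κ]
    (f : E nX → E nY → E nb → E nf)
    (hfm : Measurable (fun q : (E nX × E nY) × E nb => f q.1.1 q.1.2 q.2))
    (hfd : ∀ x y, Differentiable ℝ (f x y))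
    (hDfm : ∀ β : E nb,
      AEStronglyMeasurable (fun z : E nX × E nY => tJac (f z.1 z.2) β) (μ ⊗ₘ κ))
    (Ψ : E nX → E nt → E nf)
    (hΨm : Measurable (fun q : E nX × E nt => Ψ q.1 q.2))
    (hΨd : ∀ x, Differentiable ℝ (Ψ x))
    (hDΨm : ∀ θ : E nt, AEStronglyMeasurable (fun x => tJac (Ψ x) θ) μ)
    -- Assumption (A1)
    (g : E nf → ℝ) (Lg Ldg : ℝ) (hLg : 0 < Lg) (hLdg : 0 < Ldg)
    (hgconv : ConvexOn ℝ Set.univ g) (hg2 : ContDiff ℝ 2 g)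
    (hgB : ∀ u : E nf, ‖gradient g u‖ ≤ Lg)
    (hgH : ∀ u : E nf, ‖fderiv ℝ (gradient g) u‖ ≤ Ldg)
    -- Assumption (A2)
    (Lf Ldf : E nX × E nY → ℝ) (Lbf Lbdf Cf : ℝ)
    (hLfm : Measurable Lf) (hLdfm : Measurable Ldf)
    (hLf0 : ∀ z, 0 ≤ Lf z) (hLdf0 : ∀ z, 0 ≤ Ldf z)
    (hLbf : 0 < Lbf) (hLbdf : 0 < Lbdf) (hCf : 0 < Cf)
    (hfB : ∀ x y (β : E nb), ‖tJac (f x y) β‖ ≤ Lf (x, y))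
    (hfLip : ∀ x y (β β' : E nb),
      ‖tJac (f x y) β - tJac (f x y) β'‖ ≤ Ldf (x, y) * ‖β - β'‖)
    (hMomf : ∀ p ∈ ({2, 4} : Set ℕ),
      (Integrable (fun z => Lf z ^ p) (μ ⊗ₘ κ) ∧ ∫ z, Lf z ^ p ∂(μ ⊗ₘ κ) ≤ Lbf ^ p) ∧
      (∀ β : E nb, Integrable (fun z : E nX × E nY => ‖f z.1 z.2 β‖ ^ p) (μ ⊗ₘ κ) ∧
          ∫ z : E nX × E nY, ‖f z.1 z.2 β‖ ^ p ∂(μ ⊗ₘ κ) ≤ Cf ^ p) ∧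
      (Integrable (fun z => Ldf z ^ p) (μ ⊗ₘ κ) ∧ ∫ z, Ldf z ^ p ∂(μ ⊗ₘ κ) ≤ Lbdf ^ p))
    -- Assumption (A3)
    (LΨ LdΨ : E nX → ℝ) (LbΨ LbdΨ CΨ : ℝ)
    (hLΨm : Measurable LΨ) (hLdΨm : Measurable LdΨ)
    (hLΨ0 : ∀ x, 0 ≤ LΨ x) (hLdΨ0 : ∀ x, 0 ≤ LdΨ x)
    (hLbΨ : 0 < LbΨ) (hLbdΨ : 0 < LbdΨ) (hCΨ : 0 < CΨ)
    (hΨB : ∀ x (θ : E nt), ‖tJac (Ψ x) θ‖ ≤ LΨ x)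
    (hΨLip : ∀ x (θ θ' : E nt),
      ‖tJac (Ψ x) θ - tJac (Ψ x) θ'‖ ≤ LdΨ x * ‖θ - θ'‖)
    (hMomΨ : ∀ p ∈ ({2, 4} : Set ℕ),
      (Integrable (fun x => LΨ x ^ p) μ ∧ ∫ x, LΨ x ^ p ∂μ ≤ LbΨ ^ p) ∧
      (∀ θ : E nt, Integrable (fun x => ‖Ψ x θ‖ ^ p) μ ∧ ∫ x, ‖Ψ x θ‖ ^ p ∂μ ≤ CΨ ^ p) ∧
      (Integrable (fun x => LdΨ x ^ p) μ ∧ ∫ x, LdΨ x ^ p ∂μ ≤ LbdΨ ^ p))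
    -- Assumption (A4): stochastic Łojasiewicz condition
    (M : ℝ) (hM : 0 < M)
    (hLoj : ∀ (β : E nb) (θ : E nt),
      Qerr μ (condF κ f) Ψ β θ ≤
        M * ‖∫ x, tJac (Ψ x) θ (condF κ f x β - Ψ x θ) ∂μ‖ ^ 2)

    (γ lam : ℝ) (hγ : 0 < γ) (hlam : 0 < lam) (β : E nb) (θ : E nt) :
    ⟪-∫ x, tJac (Ψ x) θ (fderiv ℝ (gradient g) (Ψ x θ) (condF κ f x β - Ψ x θ)
          + lam • (condF κ f x β - Ψ x θ)) ∂μ,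
      γ • ∫ x, tJac (Ψ x) θ (condF κ f x β - Ψ x θ) ∂μ⟫ ≤
    -(γ * (lam / M - 2 * LbΨ ^ 2 * Ldg)) * Qerr μ (condF κ f) Ψ β θ :=
  statement9_general μ κ f hfm Ψ hΨm hDΨm g Ldg hgH Lf Ldf Lbf Lbdf Cf hMomf LΨ LdΨ LbΨ LbdΨ CΨ hLΨm
    hΨB hMomΨ M hLoj γ lam hγ hlam β θ
end
end

section
/- Under the Setup and Assumptions (A1), (A2), (A3), (A4), let λ satisfy λ ≥ L_{∇g} and λ > 2 M L̄_Ψ² L_{∇g}, let γ > 0, and set C = γ(λ/M − 2 L̄_Ψ² L_{∇g}) − 4 λ L̄_f² L_{∇g}. If 2C > λ² L̄_f², then for every ε with λ² L̄_f²/C < ε < 2, setting c₁ = C − λ² L̄_f²/ε > 0 and c₂ = 1 − ε/2 > 0, one has for all (β,θ): ⟨ D_β(β,θ), Γ_β(β,θ) ⟩ + ⟨ D_θ(β,θ), Γ_θ(β,θ) ⟩ ≤ − c₁ Q(β,θ) − c₂ ‖∇G(β)‖². -/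
open MeasureTheory ProbabilityTheory RealInnerProductSpace

noncomputable section

/-- `∇_β F(x,β) = ∫ ∇_β f(x,y,β) κ(x)(dy)`, the transposed Jacobian of the
conditional expectation model. -/
noncomputable def DF {nX nY nb nf : ℕ} (κ : Kernel (E nX) (E nY))
    (f : E nX → E nY → E nb → E nf) (x : E nX) (β : E nb) : E nf →L[ℝ] E nb :=
  ∫ y, tJac (f x y) β ∂(κ x)

/-- `∇G(β) = ∫ ∇_β F(x,β) ∇g(F(x,β)) μ(dx)`. -/
noncomputable def gradG {nX nY nb nf : ℕ} (μ : Measure (E nX)) (κ : Kernel (E nX) (E nY))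
    (f : E nX → E nY → E nb → E nf) (g : E nf → ℝ) (β : E nb) : E nb :=
  ∫ x, DF κ f x β (gradient g (condF κ f x β)) ∂μ

/-- The β-gradient `D_β(β,θ)` of the Lyapunov function `W`. -/
noncomputable def Dbeta {nX nY nb nt nf : ℕ} (μ : Measure (E nX)) (κ : Kernel (E nX) (E nY))
    (f : E nX → E nY → E nb → E nf) (Ψ : E nX → E nt → E nf) (g : E nf → ℝ) (lam : ℝ)
    (β : E nb) (θ : E nt) : E nb :=
  gradG μ κ f g β
  + (∫ x, DF κ f x β (gradient g (condF κ f x β) - gradient g (Ψ x θ)) ∂μ)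
  + lam • ∫ x, DF κ f x β (condF κ f x β - Ψ x θ) ∂μ

/-- The β-component `Γ_β(β,θ)` of the expected direction of the method. -/
noncomputable def Gammabeta {nX nY nb nt nf : ℕ} (μ : Measure (E nX)) (κ : Kernel (E nX) (E nY))
    (f : E nX → E nY → E nb → E nf) (Ψ : E nX → E nt → E nf) (g : E nf → ℝ)
    (β : E nb) (θ : E nt) : E nb :=
  -∫ x, DF κ f x β (gradient g (Ψ x θ)) ∂μ

/-- The θ-gradient `D_θ(β,θ)` of the Lyapunov function `W`, with the Hessian and the
regularization combined as `∇²g(Ψ) + λ I`. -/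
noncomputable def Dtheta {nX nY nb nt nf : ℕ} (μ : Measure (E nX)) (κ : Kernel (E nX) (E nY))
    (f : E nX → E nY → E nb → E nf) (Ψ : E nX → E nt → E nf) (g : E nf → ℝ) (lam : ℝ)
    (β : E nb) (θ : E nt) : E nt :=
  -∫ x, tJac (Ψ x) θ (fderiv ℝ (gradient g) (Ψ x θ) (condF κ f x β - Ψ x θ)
      + lam • (condF κ f x β - Ψ x θ)) ∂μ

/-- The θ-component `Γ_θ(β,θ)` of the expected direction of the method. -/
noncomputable def Gammatheta {nX nY nb nt nf : ℕ} (μ : Measure (E nX)) (κ : Kernel (E nX) (E nY))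
    (f : E nX → E nY → E nb → E nf) (Ψ : E nX → E nt → E nf) (γ : ℝ)
    (β : E nb) (θ : E nt) : E nt :=
  γ • ∫ x, tJac (Ψ x) θ (condF κ f x β - Ψ x θ) ∂μ

/-!
Fix `(β, θ)` and put `e = F(·, β) - Ψ(·, θ)`, so that `Q = ‖e‖²_{L²(μ)} / 2`. After splitting the
integrals, `D_β = ∇G + P + λR`, `Γ_β = P - ∇G`, `D_θ = -(T + λS)` and `Γ_θ = γS`, where `P, R, S, T`
are the integrals of `∇_β F` applied to `∇g(F) - ∇g(Ψ)` and `e`, and of `∇_θ Ψ` applied to `e` and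
`∇²g(Ψ) e`. By Cauchy–Schwarz in `L²(μ)` each of them is at most a Lipschitz constant times
`L̄ ‖e‖_{L²}`; for `∇_β F` the `L²(μ)` bound on the kernel average of `L_f` comes from Jensen's
inequality. Expanding the inner products, the good terms are `-‖∇G‖²` and `-γλ‖S‖² ≤ -γλQ/M` (by
(A4)); the cross term `λ⟨R, ∇G⟩` is split by Young's inequality with weight `ε`, and all remaining
terms are `O(Q)`.
-/

section Integral

variable {α : Type*} [MeasurableSpace α] {μ : Measure α}
  {F G : Type*} [NormedAddCommGroup F] [NormedSpace ℝ F] [NormedAddCommGroup G] [NormedSpace ℝ G]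

theorem integral_mul_le_sqrt_mul_sqrt {f g : α → ℝ} (hf : MemLp f 2 μ) (hg : MemLp g 2 μ) :
    ∫ x, f x * g x ∂μ ≤ √(∫ x, f x ^ 2 ∂μ) * √(∫ x, g x ^ 2 ∂μ) := by
  have hofReal : ENNReal.ofReal 2 = 2 := by norm_num
  calc ∫ x, f x * g x ∂μ ≤ ∫ x, ‖f x‖ * ‖g x‖ ∂μ :=
        integral_mono (hf.integrable_mul hg) (hf.norm.integrable_mul hg.norm)
          fun _ => (le_abs_self _).trans_eq (abs_mul _ _)
    _ ≤ (∫ x, ‖f x‖ ^ (2 : ℝ) ∂μ) ^ (1 / 2 : ℝ) * (∫ x, ‖g x‖ ^ (2 : ℝ) ∂μ) ^ (1 / 2 : ℝ) :=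
        integral_mul_norm_le_Lp_mul_Lq .two_two (hofReal ▸ hf) (hofReal ▸ hg)
    _ = √(∫ x, f x ^ 2 ∂μ) * √(∫ x, g x ^ 2 ∂μ) := by
        simp only [Real.rpow_two, Real.norm_eq_abs, sq_abs, Real.sqrt_eq_rpow]

theorem sq_norm_integral_le_integral_sq_norm [IsProbabilityMeasure μ] {h : α → F}
    (hh : MemLp h 2 μ) : ‖∫ x, h x ∂μ‖ ^ 2 ≤ ∫ x, ‖h x‖ ^ 2 ∂μ := by
  have hmean : ∫ x, ‖h x‖ ∂μ ≤ √(∫ x, ‖h x‖ ^ 2 ∂μ) := by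
    simpa using integral_mul_le_sqrt_mul_sqrt hh.norm (memLp_const (1 : ℝ) (μ := μ))
  calc ‖∫ x, h x ∂μ‖ ^ 2 ≤ √(∫ x, ‖h x‖ ^ 2 ∂μ) ^ 2 := by
        gcongr
        exact (norm_integral_le_integral_norm h).trans hmean
    _ = ∫ x, ‖h x‖ ^ 2 ∂μ := Real.sq_sqrt (integral_nonneg fun _ => by positivity)

theorem integrable_clm_apply {A : α → G →L[ℝ] F} {w : α → G} {a b : α → ℝ}
    (hA : AEStronglyMeasurable A μ) (hw : AEStronglyMeasurable w μ)
    (ha : MemLp a 2 μ) (hb : MemLp b 2 μ)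
    (hAa : ∀ᵐ x ∂μ, ‖A x‖ ≤ a x) (hwb : ∀ᵐ x ∂μ, ‖w x‖ ≤ b x) :
    Integrable (fun x => A x (w x)) μ := by
  refine (ha.integrable_mul hb).mono'
    (Continuous.comp_aestronglyMeasurable₂ (g := fun (T : G →L[ℝ] F) v => T v) (by fun_prop)
      hA hw) ?_
  filter_upwards [hAa, hwb] with x hAx hwx
  exact (A x).le_of_opNorm_le_of_le hAx hwx

theorem norm_integral_clm_apply_le {A : α → G →L[ℝ] F} {w : α → G} {a b : α → ℝ}
    {c La Lb : ℝ} (hc : 0 ≤ c) (hLa : 0 ≤ La) (hLb : 0 ≤ Lb) (ha : MemLp a 2 μ) (hb : MemLp b 2 μ)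
    (haL : ∫ x, a x ^ 2 ∂μ ≤ La ^ 2) (hbL : ∫ x, b x ^ 2 ∂μ ≤ Lb ^ 2)
    (hAa : ∀ᵐ x ∂μ, ‖A x‖ ≤ a x) (hwb : ∀ᵐ x ∂μ, ‖w x‖ ≤ c * b x) :
    ‖∫ x, A x (w x) ∂μ‖ ≤ c * (La * Lb) :=
  calc ‖∫ x, A x (w x) ∂μ‖ ≤ ∫ x, c * (a x * b x) ∂μ := by
        refine norm_integral_le_of_norm_le ((ha.integrable_mul hb).const_mul c) ?_
        filter_upwards [hAa, hwb] with x hAx hwx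
        calc ‖A x (w x)‖ ≤ a x * (c * b x) := (A x).le_of_opNorm_le_of_le hAx hwx
          _ = c * (a x * b x) := by ring
    _ = c * ∫ x, a x * b x ∂μ := integral_const_mul c _
    _ ≤ c * (√(∫ x, a x ^ 2 ∂μ) * √(∫ x, b x ^ 2 ∂μ)) := by
        gcongr; exact integral_mul_le_sqrt_mul_sqrt ha hb
    _ ≤ c * (La * Lb) := by
        gcongr
        · exact (Real.sqrt_le_left hLa).2 haL
        · exact (Real.sqrt_le_left hLb).2 hbL

end Integral

section Kernel

variable {α β F : Type*} [MeasurableSpace α] [MeasurableSpace β]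
  [NormedAddCommGroup F] [NormedSpace ℝ F]
  {μ : Measure α} [SFinite μ] {κ : Kernel α β} {h : α × β → F}

theorem MeasureTheory.AEStronglyMeasurable.integral_kernel_of_compProd [IsSFiniteKernel κ]
    (hh : AEStronglyMeasurable h (μ ⊗ₘ κ)) :
    AEStronglyMeasurable (fun x => ∫ y, h (x, y) ∂κ x) μ := by
  rw [Measure.compProd] at hh
  simpa using hh.integral_kernel_compProd

theorem ae_norm_integral_kernel_le [IsSFiniteKernel κ] {L : α × β → ℝ}
    (hL : Integrable L (μ ⊗ₘ κ)) (hhL : ∀ z, ‖h z‖ ≤ L z) :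
    ∀ᵐ x ∂μ, ‖∫ y, h (x, y) ∂κ x‖ ≤ ∫ y, L (x, y) ∂κ x := by
  filter_upwards [(Measure.integrable_compProd_iff hL.1).1 hL |>.1] with x hx
  exact norm_integral_le_of_norm_le hx (ae_of_all _ fun y => hhL (x, y))

theorem ae_sq_norm_integral_kernel_le [IsMarkovKernel κ] (hh : MemLp h 2 (μ ⊗ₘ κ)) :
    ∀ᵐ x ∂μ, ‖∫ y, h (x, y) ∂κ x‖ ^ 2 ≤ ∫ y, ‖h (x, y)‖ ^ 2 ∂κ x := by
  have hsq := hh.integrable_norm_pow two_ne_zero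
  filter_upwards [hh.1.compProd_mk_left, (Measure.integrable_compProd_iff hsq.1).1 hsq |>.1]
    with x hmeas hint
  exact sq_norm_integral_le_integral_sq_norm ((memLp_two_iff_integrable_sq_norm hmeas).2 hint)

theorem MeasureTheory.MemLp.integral_kernel [IsMarkovKernel κ] (hh : MemLp h 2 (μ ⊗ₘ κ)) :
    MemLp (fun x => ∫ y, h (x, y) ∂κ x) 2 μ := by
  have hmeas := hh.1.integral_kernel_of_compProd
  have hsq := hh.integrable_norm_pow two_ne_zero
  refine (memLp_two_iff_integrable_sq_norm hmeas).2
    (hsq.integral_compProd.mono' (hmeas.norm.pow 2) ?_)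
  filter_upwards [ae_sq_norm_integral_kernel_le hh] with x hx
  rwa [Real.norm_of_nonneg (by positivity)]

theorem integral_sq_norm_integral_kernel_le [IsMarkovKernel κ] (hh : MemLp h 2 (μ ⊗ₘ κ)) :
    ∫ x, ‖∫ y, h (x, y) ∂κ x‖ ^ 2 ∂μ ≤ ∫ z, ‖h z‖ ^ 2 ∂(μ ⊗ₘ κ) := by
  have hsq := hh.integrable_norm_pow two_ne_zero
  rw [Measure.integral_compProd hsq]
  exact integral_mono_ae (hh.integral_kernel.integrable_norm_pow two_ne_zero)
    hsq.integral_compProd (ae_sq_norm_integral_kernel_le hh)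

end Kernel

theorem ContDiff.gradient {H : Type*} [NormedAddCommGroup H] [InnerProductSpace ℝ H]
    [CompleteSpace H] {g : H → ℝ} {n : WithTop ℕ∞} (hg : ContDiff ℝ (n + 1) g) :
    ContDiff ℝ n (gradient g) :=
  (InnerProductSpace.toDual ℝ H).symm.contDiff.comp (hg.fderiv_right le_rfl)

theorem norm_gradient_sub_le {H : Type*} [NormedAddCommGroup H] [InnerProductSpace ℝ H]
    [CompleteSpace H] {g : H → ℝ} (hg : ContDiff ℝ 2 g) {L : ℝ}
    (hgH : ∀ p, ‖fderiv ℝ (gradient g) p‖ ≤ L) (p q : H) :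
    ‖gradient g p - gradient g q‖ ≤ L * ‖p - q‖ :=
  convex_univ.norm_image_sub_le_of_norm_fderiv_le
    (fun _ _ => (hg.gradient.differentiable one_ne_zero).differentiableAt) (fun x _ => hgH x)
    (Set.mem_univ q) (Set.mem_univ p)

section Descent

variable {α : Type*} [MeasurableSpace α] {μ : Measure α} [IsProbabilityMeasure μ]
  {H Hb Ht : Type*} [NormedAddCommGroup H] [InnerProductSpace ℝ H] [CompleteSpace H]
  [NormedAddCommGroup Hb] [InnerProductSpace ℝ Hb]
  [NormedAddCommGroup Ht] [InnerProductSpace ℝ Ht]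

theorem inner_add_inner_le_of_norm_le {G P R : Hb} {S T : Ht} {s La Lb Ldg M lam γ ε : ℝ}
    (hLdg : 0 ≤ Ldg) (hlam : Ldg ≤ lam) (hγ : 0 ≤ γ) (hM : 0 < M) (hε : 0 < ε)
    (hP : ‖P‖ ≤ Ldg * (La * s)) (hR : ‖R‖ ≤ La * s) (hS : ‖S‖ ≤ Lb * s)
    (hT : ‖T‖ ≤ Ldg * (Lb * s)) (hLoj : 1 / 2 * s ^ 2 ≤ M * ‖S‖ ^ 2) :
    ⟪G + P + lam • R, P - G⟫ + ⟪-(T + lam • S), γ • S⟫ ≤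
      -((γ * (lam / M - 2 * Lb ^ 2 * Ldg) - 4 * lam * La ^ 2 * Ldg - lam ^ 2 * La ^ 2 / ε)
        * (1 / 2 * s ^ 2)) - (1 - ε / 2) * ‖G‖ ^ 2 := by
  have hlam0 : 0 ≤ lam := hLdg.trans hlam
  have expand : ⟪G + P + lam • R, P - G⟫ + ⟪-(T + lam • S), γ • S⟫ =
      ‖P‖ ^ 2 - ‖G‖ ^ 2 + lam * ⟪R, P⟫ - lam * ⟪R, G⟫ - γ * ⟪T, S⟫ - γ * lam * ‖S‖ ^ 2 := by
    simp only [inner_add_left, inner_sub_right, inner_neg_left, real_inner_smul_left,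
      real_inner_smul_right, real_inner_self_eq_norm_sq, real_inner_comm P G]
    ring
  have hPP : ‖P‖ ^ 2 ≤ lam * Ldg * La ^ 2 * s ^ 2 :=
    calc ‖P‖ ^ 2 ≤ (Ldg * (La * s)) ^ 2 := pow_le_pow_left₀ (norm_nonneg _) hP 2
      _ = Ldg * Ldg * (La ^ 2 * s ^ 2) := by ring
      _ ≤ lam * Ldg * (La ^ 2 * s ^ 2) := by gcongr
      _ = lam * Ldg * La ^ 2 * s ^ 2 := by ring
  have hRP : lam * ⟪R, P⟫ ≤ lam * Ldg * La ^ 2 * s ^ 2 :=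
    calc lam * ⟪R, P⟫ ≤ lam * (‖R‖ * ‖P‖) := by gcongr; exact real_inner_le_norm R P
      _ ≤ lam * ((La * s) * (Ldg * (La * s))) :=
          mul_le_mul_of_nonneg_left (mul_le_mul hR hP (norm_nonneg _) ((norm_nonneg _).trans hR))
            hlam0
      _ = lam * Ldg * La ^ 2 * s ^ 2 := by ring
  have hRG : -(lam * ⟪R, G⟫) ≤ ε / 2 * ‖G‖ ^ 2 + lam ^ 2 * La ^ 2 * s ^ 2 / (2 * ε) := by
    have young : ε / 2 * ‖G‖ ^ 2 + lam ^ 2 * La ^ 2 * s ^ 2 / (2 * ε) - lam * (La * s) * ‖G‖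
        = (ε * ‖G‖ - lam * (La * s)) ^ 2 / (2 * ε) := by
      field_simp
      ring
    calc -(lam * ⟪R, G⟫) ≤ lam * (‖R‖ * ‖G‖) := by
          rw [← mul_neg]; gcongr; exact (neg_le_abs _).trans (abs_real_inner_le_norm R G)
      _ ≤ lam * (La * s) * ‖G‖ := by rw [← mul_assoc]; gcongr
      _ ≤ ε / 2 * ‖G‖ ^ 2 + lam ^ 2 * La ^ 2 * s ^ 2 / (2 * ε) := by
          have : 0 ≤ (ε * ‖G‖ - lam * (La * s)) ^ 2 / (2 * ε) := by positivity
          linarith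
  have hTS : -(γ * ⟪T, S⟫) ≤ γ * Ldg * Lb ^ 2 * s ^ 2 :=
    calc -(γ * ⟪T, S⟫) ≤ γ * (‖T‖ * ‖S‖) := by
          rw [← mul_neg]; gcongr; exact (neg_le_abs _).trans (abs_real_inner_le_norm T S)
      _ ≤ γ * ((Ldg * (Lb * s)) * (Lb * s)) :=
          mul_le_mul_of_nonneg_left (mul_le_mul hT hS (norm_nonneg _) ((norm_nonneg _).trans hT))
            hγ
      _ = γ * Ldg * Lb ^ 2 * s ^ 2 := by ring
  have hSS : γ * lam * (s ^ 2 / (2 * M)) ≤ γ * lam * ‖S‖ ^ 2 := by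
    gcongr
    rw [div_le_iff₀ (by positivity)]
    linarith
  rw [expand]
  linear_combination hPP + hRP + hRG + hTS + hSS

theorem inner_add_inner_integral_le {g : H → ℝ} (hg : ContDiff ℝ 2 g) {Lg Ldg : ℝ}
    (hgB : ∀ p, ‖gradient g p‖ ≤ Lg) (hgH : ∀ p, ‖fderiv ℝ (gradient g) p‖ ≤ Ldg)
    {A : α → H →L[ℝ] Hb} {B : α → H →L[ℝ] Ht} {u v : α → H} {a b : α → ℝ} {La Lb : ℝ}
    (hA : AEStronglyMeasurable A μ) (hB : AEStronglyMeasurable B μ)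
    (hu : MemLp u 2 μ) (hv : MemLp v 2 μ) (ha : MemLp a 2 μ) (hb : MemLp b 2 μ)
    (hAa : ∀ᵐ x ∂μ, ‖A x‖ ≤ a x) (hBb : ∀ᵐ x ∂μ, ‖B x‖ ≤ b x)
    (hLa : 0 ≤ La) (haL : ∫ x, a x ^ 2 ∂μ ≤ La ^ 2)
    (hLb : 0 ≤ Lb) (hbL : ∫ x, b x ^ 2 ∂μ ≤ Lb ^ 2) {M : ℝ} (hM : 0 < M)
    (hLoj : 1 / 2 * ∫ x, ‖u x - v x‖ ^ 2 ∂μ ≤ M * ‖∫ x, B x (u x - v x) ∂μ‖ ^ 2)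
    {lam γ ε : ℝ} (hlam : Ldg ≤ lam) (hγ : 0 ≤ γ) (hε : 0 < ε) :
    ⟪(∫ x, A x (gradient g (u x)) ∂μ) + (∫ x, A x (gradient g (u x) - gradient g (v x)) ∂μ)
        + lam • ∫ x, A x (u x - v x) ∂μ, -∫ x, A x (gradient g (v x)) ∂μ⟫
      + ⟪-∫ x, B x (fderiv ℝ (gradient g) (v x) (u x - v x) + lam • (u x - v x)) ∂μ,
        γ • ∫ x, B x (u x - v x) ∂μ⟫ ≤
      -((γ * (lam / M - 2 * Lb ^ 2 * Ldg) - 4 * lam * La ^ 2 * Ldg - lam ^ 2 * La ^ 2 / ε)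
        * (1 / 2 * ∫ x, ‖u x - v x‖ ^ 2 ∂μ))
      - (1 - ε / 2) * ‖∫ x, A x (gradient g (u x)) ∂μ‖ ^ 2 := by
  have hLdg : 0 ≤ Ldg := (norm_nonneg _).trans (hgH 0)
  have hg1 : ContDiff ℝ 1 (gradient g) := hg.gradient
  have he : MemLp (fun x => u x - v x) 2 μ := hu.sub hv
  set s := √(∫ x, ‖u x - v x‖ ^ 2 ∂μ)
  have hs0 : 0 ≤ s := Real.sqrt_nonneg _
  have hs2 : s ^ 2 = ∫ x, ‖u x - v x‖ ^ 2 ∂μ :=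
    Real.sq_sqrt (integral_nonneg fun _ => by positivity)
  have hAgu : Integrable (fun x => A x (gradient g (u x))) μ :=
    integrable_clm_apply hA (hg1.continuous.comp_aestronglyMeasurable hu.1) ha (memLp_const Lg)
      hAa (ae_of_all _ fun _ => hgB _)
  have hAgv : Integrable (fun x => A x (gradient g (v x))) μ :=
    integrable_clm_apply hA (hg1.continuous.comp_aestronglyMeasurable hv.1) ha (memLp_const Lg)
      hAa (ae_of_all _ fun _ => hgB _)
  have hBe : Integrable (fun x => B x (u x - v x)) μ :=
    integrable_clm_apply hB he.1 hb he.norm hBb (ae_of_all _ fun _ => le_rfl)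
  have hBHe : Integrable (fun x => B x (fderiv ℝ (gradient g) (v x) (u x - v x))) μ :=
    integrable_clm_apply hB
      (Continuous.comp_aestronglyMeasurable₂ (g := fun (T : H →L[ℝ] H) p => T p) (by fun_prop)
        ((hg1.continuous_fderiv one_ne_zero).comp_aestronglyMeasurable hv.1) he.1)
      hb (he.norm.const_mul Ldg) hBb (ae_of_all _ fun _ => (fderiv ℝ _ _).le_of_opNorm_le (hgH _) _)
  have hΓβ : -∫ x, A x (gradient g (v x)) ∂μ = (∫ x, A x (gradient g (u x) - gradient g (v x)) ∂μ)
      - ∫ x, A x (gradient g (u x)) ∂μ := by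
    simp only [map_sub]
    rw [integral_sub hAgu hAgv]
    abel
  have hDθ : -∫ x, B x (fderiv ℝ (gradient g) (v x) (u x - v x) + lam • (u x - v x)) ∂μ
      = -((∫ x, B x (fderiv ℝ (gradient g) (v x) (u x - v x)) ∂μ)
        + lam • ∫ x, B x (u x - v x) ∂μ) := by
    simp only [map_add, map_smul]
    have hBe_smul : Integrable (fun x => lam • B x (u x - v x)) μ := hBe.smul lam
    rw [integral_add hBHe hBe_smul, integral_smul]
  rw [← hs2] at hLoj ⊢
  rw [hΓβ, hDθ]
  exact inner_add_inner_le_of_norm_le hLdg hlam hγ hM hε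
    (norm_integral_clm_apply_le hLdg hLa hs0 ha he.norm haL hs2.ge hAa
      (ae_of_all _ fun _ => norm_gradient_sub_le hg hgH _ _))
    ((norm_integral_clm_apply_le zero_le_one hLa hs0 ha he.norm haL hs2.ge hAa
      (ae_of_all _ fun _ => (one_mul _).ge)).trans_eq (one_mul _))
    ((norm_integral_clm_apply_le zero_le_one hLb hs0 hb he.norm hbL hs2.ge hBb
      (ae_of_all _ fun _ => (one_mul _).ge)).trans_eq (one_mul _))
    (norm_integral_clm_apply_le hLdg hLb hs0 hb he.norm hbL hs2.ge hBb
      (ae_of_all _ fun _ => (fderiv ℝ _ _).le_of_opNorm_le (hgH _) _))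
    hLoj

end Descent

theorem descent_constants_pos {a C ε : ℝ} (ha : 0 ≤ a) (hC : a < 2 * C) (hε₁ : a / C < ε)
    (hε₂ : ε < 2) : 0 < ε ∧ 0 < C - a / ε ∧ 0 < 1 - ε / 2 := by
  have hC0 : 0 < C := by linarith
  have hε0 : 0 < ε := (div_nonneg ha hC0.le).trans_lt hε₁
  rw [div_lt_iff₀ hC0] at hε₁
  refine ⟨hε0, ?_, by linarith⟩
  rw [sub_pos, div_lt_iff₀ hε0]
  linarith

theorem statement11_general {nX nY nb nt nf : ℕ}
    (μ : Measure (E nX)) [IsProbabilityMeasure μ]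
    (κ : Kernel (E nX) (E nY)) [IsMarkovKernel κ]
    (f : E nX → E nY → E nb → E nf)
    (hfm : Measurable (fun q : (E nX × E nY) × E nb => f q.1.1 q.1.2 q.2))
    (hDfm : ∀ β : E nb,
      AEStronglyMeasurable (fun z : E nX × E nY => tJac (f z.1 z.2) β) (μ ⊗ₘ κ))
    (Ψ : E nX → E nt → E nf)
    (hΨm : Measurable (fun q : E nX × E nt => Ψ q.1 q.2))
    (hDΨm : ∀ θ : E nt, AEStronglyMeasurable (fun x => tJac (Ψ x) θ) μ)
    -- Assumption (A1)
    (g : E nf → ℝ) (Lg Ldg : ℝ)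
    (hg2 : ContDiff ℝ 2 g)
    (hgB : ∀ u : E nf, ‖gradient g u‖ ≤ Lg)
    (hgH : ∀ u : E nf, ‖fderiv ℝ (gradient g) u‖ ≤ Ldg)
    -- Assumption (A2)
    (Lf Ldf : E nX × E nY → ℝ) (Lbf Lbdf Cf : ℝ)
    (hLfm : Measurable Lf)
    (hLbf : 0 < Lbf)
    (hfB : ∀ x y (β : E nb), ‖tJac (f x y) β‖ ≤ Lf (x, y))
    (hMomf : ∀ p ∈ ({2, 4} : Set ℕ),
      (Integrable (fun z => Lf z ^ p) (μ ⊗ₘ κ) ∧ ∫ z, Lf z ^ p ∂(μ ⊗ₘ κ) ≤ Lbf ^ p) ∧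
      (∀ β : E nb, Integrable (fun z : E nX × E nY => ‖f z.1 z.2 β‖ ^ p) (μ ⊗ₘ κ) ∧
          ∫ z : E nX × E nY, ‖f z.1 z.2 β‖ ^ p ∂(μ ⊗ₘ κ) ≤ Cf ^ p) ∧
      (Integrable (fun z => Ldf z ^ p) (μ ⊗ₘ κ) ∧ ∫ z, Ldf z ^ p ∂(μ ⊗ₘ κ) ≤ Lbdf ^ p))
    -- Assumption (A3)
    (LΨ LdΨ : E nX → ℝ) (LbΨ LbdΨ CΨ : ℝ)
    (hLΨm : Measurable LΨ)
    (hLbΨ : 0 < LbΨ)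
    (hΨB : ∀ x (θ : E nt), ‖tJac (Ψ x) θ‖ ≤ LΨ x)
    (hMomΨ : ∀ p ∈ ({2, 4} : Set ℕ),
      (Integrable (fun x => LΨ x ^ p) μ ∧ ∫ x, LΨ x ^ p ∂μ ≤ LbΨ ^ p) ∧
      (∀ θ : E nt, Integrable (fun x => ‖Ψ x θ‖ ^ p) μ ∧ ∫ x, ‖Ψ x θ‖ ^ p ∂μ ≤ CΨ ^ p) ∧
      (Integrable (fun x => LdΨ x ^ p) μ ∧ ∫ x, LdΨ x ^ p ∂μ ≤ LbdΨ ^ p))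
    -- Assumption (A4): stochastic Łojasiewicz condition
    (M : ℝ) (hM : 0 < M)
    (hLoj : ∀ (β : E nb) (θ : E nt),
      Qerr μ (condF κ f) Ψ β θ ≤
        M * ‖∫ x, tJac (Ψ x) θ (condF κ f x β - Ψ x θ) ∂μ‖ ^ 2)

    (lam γ : ℝ) (hlam1 : Ldg ≤ lam) (hγ : 0 < γ)
    (C : ℝ) (hC : C = γ * (lam / M - 2 * LbΨ ^ 2 * Ldg) - 4 * lam * Lbf ^ 2 * Ldg)
    (h2C : lam ^ 2 * Lbf ^ 2 < 2 * C)
    (ε : ℝ) (hε1 : lam ^ 2 * Lbf ^ 2 / C < ε) (hε2 : ε < 2)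
    (c₁ c₂ : ℝ) (hc₁ : c₁ = C - lam ^ 2 * Lbf ^ 2 / ε) (hc₂ : c₂ = 1 - ε / 2) :
    0 < c₁ ∧ 0 < c₂ ∧
    ∀ (β : E nb) (θ : E nt),
      ⟪Dbeta μ κ f Ψ g lam β θ, Gammabeta μ κ f Ψ g β θ⟫
      + ⟪Dtheta μ κ f Ψ g lam β θ, Gammatheta μ κ f Ψ γ β θ⟫ ≤
      -(c₁ * Qerr μ (condF κ f) Ψ β θ) - c₂ * ‖gradG μ κ f g β‖ ^ 2 := by
  obtain ⟨hε0, hc₁0, hc₂0⟩ := descent_constants_pos (by positivity) h2C hε1 hε2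
  subst hc₁ hc₂ hC
  refine ⟨hc₁0, hc₂0, fun β θ => ?_⟩
  obtain ⟨⟨hLf2, hLf2_le⟩, hf2, -⟩ := hMomf 2 (by simp)
  obtain ⟨⟨hLΨ2, hLΨ2_le⟩, hΨ2, -⟩ := hMomΨ 2 (by simp)
  have hLf : MemLp Lf 2 (μ ⊗ₘ κ) :=
    (memLp_two_iff_integrable_sq hLfm.aestronglyMeasurable).2 hLf2
  have hfβ : MemLp (fun z : E nX × E nY => f z.1 z.2 β) 2 (μ ⊗ₘ κ) :=
    (memLp_two_iff_integrable_sq_norm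
      (hfm.comp (measurable_id.prodMk measurable_const)).aestronglyMeasurable).2 (hf2 β).1
  have hΨθ : MemLp (fun x => Ψ x θ) 2 μ :=
    (memLp_two_iff_integrable_sq_norm
      (hΨm.comp (measurable_id.prodMk measurable_const)).aestronglyMeasurable).2 (hΨ2 θ).1
  have hℓ : ∫ x, (∫ y, Lf (x, y) ∂κ x) ^ 2 ∂μ ≤ Lbf ^ 2 := by
    have h := integral_sq_norm_integral_kernel_le hLf
    simp only [Real.norm_eq_abs, sq_abs] at h
    exact h.trans hLf2_le
  exact inner_add_inner_integral_le (A := fun x => DF κ f x β) (B := fun x => tJac (Ψ x) θ)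
    (u := fun x => condF κ f x β) (v := fun x => Ψ x θ) (a := fun x => ∫ y, Lf (x, y) ∂κ x)
    (b := LΨ) hg2 hgB hgH (hDfm β).integral_kernel_of_compProd (hDΨm θ) hfβ.integral_kernel hΨθ
    hLf.integral_kernel ((memLp_two_iff_integrable_sq hLΨm.aestronglyMeasurable).2 hLΨ2)
    (ae_norm_integral_kernel_le (hLf.integrable one_le_two) fun z => hfB z.1 z.2 β)
    (ae_of_all _ fun x => hΨB x θ) hLbf.le hℓ hLbΨ.le hLΨ2_le hM (hLoj β θ) hlam1 hγ.le hε0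

/-- Lemma 4.3 of the paper, the descent property `⟨∇W, Γ⟩ ≤ −V`
with `V = c₁ Q + c₂ ‖∇G‖²`, in explicit form, under (A1)–(A4). -/
theorem statement11 {nX nY nb nt nf : ℕ}
    (μ : Measure (E nX)) [IsProbabilityMeasure μ]
    (κ : Kernel (E nX) (E nY)) [IsMarkovKernel κ]
    (f : E nX → E nY → E nb → E nf)
    (hfm : Measurable (fun q : (E nX × E nY) × E nb => f q.1.1 q.1.2 q.2))
    (hfd : ∀ x y, Differentiable ℝ (f x y))
    (hDfm : ∀ β : E nb,
      AEStronglyMeasurable (fun z : E nX × E nY => tJac (f z.1 z.2) β) (μ ⊗ₘ κ))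
    (Ψ : E nX → E nt → E nf)
    (hΨm : Measurable (fun q : E nX × E nt => Ψ q.1 q.2))
    (hΨd : ∀ x, Differentiable ℝ (Ψ x))
    (hDΨm : ∀ θ : E nt, AEStronglyMeasurable (fun x => tJac (Ψ x) θ) μ)
    -- Assumption (A1)
    (g : E nf → ℝ) (Lg Ldg : ℝ) (hLg : 0 < Lg) (hLdg : 0 < Ldg)
    (hgconv : ConvexOn ℝ Set.univ g) (hg2 : ContDiff ℝ 2 g)
    (hgB : ∀ u : E nf, ‖gradient g u‖ ≤ Lg)
    (hgH : ∀ u : E nf, ‖fderiv ℝ (gradient g) u‖ ≤ Ldg)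
    -- Assumption (A2)
    (Lf Ldf : E nX × E nY → ℝ) (Lbf Lbdf Cf : ℝ)
    (hLfm : Measurable Lf) (hLdfm : Measurable Ldf)
    (hLf0 : ∀ z, 0 ≤ Lf z) (hLdf0 : ∀ z, 0 ≤ Ldf z)
    (hLbf : 0 < Lbf) (hLbdf : 0 < Lbdf) (hCf : 0 < Cf)
    (hfB : ∀ x y (β : E nb), ‖tJac (f x y) β‖ ≤ Lf (x, y))
    (hfLip : ∀ x y (β β' : E nb),
      ‖tJac (f x y) β - tJac (f x y) β'‖ ≤ Ldf (x, y) * ‖β - β'‖)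
    (hMomf : ∀ p ∈ ({2, 4} : Set ℕ),
      (Integrable (fun z => Lf z ^ p) (μ ⊗ₘ κ) ∧ ∫ z, Lf z ^ p ∂(μ ⊗ₘ κ) ≤ Lbf ^ p) ∧
      (∀ β : E nb, Integrable (fun z : E nX × E nY => ‖f z.1 z.2 β‖ ^ p) (μ ⊗ₘ κ) ∧
          ∫ z : E nX × E nY, ‖f z.1 z.2 β‖ ^ p ∂(μ ⊗ₘ κ) ≤ Cf ^ p) ∧
      (Integrable (fun z => Ldf z ^ p) (μ ⊗ₘ κ) ∧ ∫ z, Ldf z ^ p ∂(μ ⊗ₘ κ) ≤ Lbdf ^ p))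
    -- Assumption (A3)
    (LΨ LdΨ : E nX → ℝ) (LbΨ LbdΨ CΨ : ℝ)
    (hLΨm : Measurable LΨ) (hLdΨm : Measurable LdΨ)
    (hLΨ0 : ∀ x, 0 ≤ LΨ x) (hLdΨ0 : ∀ x, 0 ≤ LdΨ x)
    (hLbΨ : 0 < LbΨ) (hLbdΨ : 0 < LbdΨ) (hCΨ : 0 < CΨ)
    (hΨB : ∀ x (θ : E nt), ‖tJac (Ψ x) θ‖ ≤ LΨ x)
    (hΨLip : ∀ x (θ θ' : E nt),
      ‖tJac (Ψ x) θ - tJac (Ψ x) θ'‖ ≤ LdΨ x * ‖θ - θ'‖)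
    (hMomΨ : ∀ p ∈ ({2, 4} : Set ℕ),
      (Integrable (fun x => LΨ x ^ p) μ ∧ ∫ x, LΨ x ^ p ∂μ ≤ LbΨ ^ p) ∧
      (∀ θ : E nt, Integrable (fun x => ‖Ψ x θ‖ ^ p) μ ∧ ∫ x, ‖Ψ x θ‖ ^ p ∂μ ≤ CΨ ^ p) ∧
      (Integrable (fun x => LdΨ x ^ p) μ ∧ ∫ x, LdΨ x ^ p ∂μ ≤ LbdΨ ^ p))
    -- Assumption (A4): stochastic Łojasiewicz condition
    (M : ℝ) (hM : 0 < M)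
    (hLoj : ∀ (β : E nb) (θ : E nt),
      Qerr μ (condF κ f) Ψ β θ ≤
        M * ‖∫ x, tJac (Ψ x) θ (condF κ f x β - Ψ x θ) ∂μ‖ ^ 2)

    (lam γ : ℝ) (hlam1 : Ldg ≤ lam) (hlam2 : 2 * M * LbΨ ^ 2 * Ldg < lam) (hγ : 0 < γ)
    (C : ℝ) (hC : C = γ * (lam / M - 2 * LbΨ ^ 2 * Ldg) - 4 * lam * Lbf ^ 2 * Ldg)
    (h2C : lam ^ 2 * Lbf ^ 2 < 2 * C)
    (ε : ℝ) (hε1 : lam ^ 2 * Lbf ^ 2 / C < ε) (hε2 : ε < 2)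
    (c₁ c₂ : ℝ) (hc₁ : c₁ = C - lam ^ 2 * Lbf ^ 2 / ε) (hc₂ : c₂ = 1 - ε / 2) :
    0 < c₁ ∧ 0 < c₂ ∧
    ∀ (β : E nb) (θ : E nt),
      ⟪Dbeta μ κ f Ψ g lam β θ, Gammabeta μ κ f Ψ g β θ⟫
      + ⟪Dtheta μ κ f Ψ g lam β θ, Gammatheta μ κ f Ψ γ β θ⟫ ≤
      -(c₁ * Qerr μ (condF κ f) Ψ β θ) - c₂ * ‖gradG μ κ f g β‖ ^ 2 :=
  statement11_general μ κ f hfm hDfm Ψ hΨm hDΨm g Lg Ldg hg2 hgB hgH Lf Ldf Lbf Lbdf Cf hLfm hLbf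
    hfB hMomf LΨ LdΨ LbΨ LbdΨ CΨ hLΨm hLbΨ hΨB hMomΨ M hM hLoj lam γ hlam1 hγ C hC h2C ε hε1 hε2 c₁
    c₂ hc₁ hc₂
end
end

section
/- Under the Setup and Assumptions (A1), (A2), for all u, v ∈ ℝ^{n_β}: ‖ ∫ [ ∇_β F(x,u) ∇g(F(x,u)) − ∇_β F(x,v) ∇g(F(x,v)) ] μ(dx) ‖ ≤ ( L̄_f² L_{∇g} + L_g L̄_{∇f} ) ‖u − v‖. -/
open MeasureTheory ProbabilityTheory RealInnerProductSpace

noncomputable section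

/-! For fixed `x`, split `A_u (∇g (F u)) - A_v (∇g (F v))`, with `A_β = ∇_β F(x,β)`, as
`A_u (∇g (F u) - ∇g (F v)) + (A_u - A_v) (∇g (F v))`. By the mean value theorem both `F(x,·)`
and `A_u` are controlled by `S x = ∫ L_f(x,y) κ(x)(dy)`, so the first term is at most
`L_{∇g} S(x)² ‖u - v‖` and the second at most `L_g (∫ L_{∇f}(x,y) κ(x)(dy)) ‖u - v‖`.
Jensen gives `S(x)² ≤ ∫ L_f(x,y)² κ(x)(dy)`; integrating in `x` turns these into moments
under `π = μ ⊗ κ`, and Jensen once more gives `∫ L_{∇f} dπ ≤ L̄_{∇f}`. -/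

lemma norm_sub_le_of_norm_fderiv_le {G H : Type*} [NormedAddCommGroup G] [NormedSpace ℝ G]
    [NormedAddCommGroup H] [NormedSpace ℝ H] {φ : G → H} (hφ : Differentiable ℝ φ) {C : ℝ}
    (h : ∀ x, ‖fderiv ℝ φ x‖ ≤ C) (u v : G) : ‖φ u - φ v‖ ≤ C * ‖u - v‖ :=
  Convex.norm_image_sub_le_of_norm_fderiv_le (fun x _ => hφ x) (fun x _ => h x)
    convex_univ trivial trivial

lemma norm_sub_le_of_norm_tJac_le {n m : ℕ} {φ : E n → E m} (hφ : Differentiable ℝ φ) {C : ℝ}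
    (h : ∀ x, ‖tJac φ x‖ ≤ C) (u v : E n) : ‖φ u - φ v‖ ≤ C * ‖u - v‖ :=
  norm_sub_le_of_norm_fderiv_le hφ (fun x => (ContinuousLinearMap.adjoint.norm_map _).symm.trans_le
    (h x)) u v

lemma differentiable_gradient_of_contDiff_two {F : Type*} [NormedAddCommGroup F]
    [InnerProductSpace ℝ F] [CompleteSpace F] {g : F → ℝ} (hg : ContDiff ℝ 2 g) :
    Differentiable ℝ (gradient g) :=
  (InnerProductSpace.toDual ℝ F).symm.toContinuousLinearEquiv.differentiable.comp
    ((hg.fderiv_right (by norm_num)).differentiable one_ne_zero)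

lemma ContinuousLinearMap.norm_apply_sub_apply_le {F G : Type*} [NormedAddCommGroup F]
    [NormedSpace ℝ F] [NormedAddCommGroup G] [NormedSpace ℝ G] (A B : F →L[ℝ] G) (a b : F) :
    ‖A a - B b‖ ≤ ‖A‖ * ‖a - b‖ + ‖A - B‖ * ‖b‖ :=
  calc ‖A a - B b‖ = ‖A (a - b) + (A - B) b‖ := by
        rw [map_sub, sub_apply]; abel_nf
    _ ≤ ‖A‖ * ‖a - b‖ + ‖A - B‖ * ‖b‖ :=
        (norm_add_le _ _).trans (add_le_add (A.le_opNorm _) ((A - B).le_opNorm _))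

section Integral

variable {Y : Type*} [MeasurableSpace Y] {ν : Measure Y}

lemma sq_integral_le_integral_sq [IsProbabilityMeasure ν] {h : Y → ℝ} (hh : MemLp h 2 ν) :
    (∫ y, h y ∂ν) ^ 2 ≤ ∫ y, h y ^ 2 ∂ν := by
  have := variance_nonneg h ν
  rw [variance_eq_sub hh] at this
  simp only [Pi.pow_apply] at this
  linarith

lemma integral_le_of_integral_sq_le [IsProbabilityMeasure ν] {h : Y → ℝ} (hh : MemLp h 2 ν)
    {C : ℝ} (hC : 0 ≤ C) (h2 : ∫ y, h y ^ 2 ∂ν ≤ C ^ 2) : ∫ y, h y ∂ν ≤ C :=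
  le_of_sq_le_sq ((sq_integral_le_integral_sq hh).trans h2) hC

variable {H : Type*} [NormedAddCommGroup H] [NormedSpace ℝ H]

lemma norm_integral_sub_integral_le {φ ψ : Y → H} {L : Y → ℝ} {c : ℝ} (hφ : Integrable φ ν)
    (hψ : Integrable ψ ν) (hL : Integrable L ν) (h : ∀ y, ‖φ y - ψ y‖ ≤ L y * c) :
    ‖∫ y, φ y ∂ν - ∫ y, ψ y ∂ν‖ ≤ (∫ y, L y ∂ν) * c := by
  rw [← integral_sub hφ hψ, ← integral_mul_const]
  exact norm_integral_le_of_norm_le (hL.mul_const c) (ae_of_all _ h)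

variable {G H' K : Type*} [NormedAddCommGroup G]
  [NormedAddCommGroup H'] [NormedSpace ℝ H'] [NormedAddCommGroup K] [NormedSpace ℝ K]

theorem norm_integral_apply_sub_integral_apply_le [IsProbabilityMeasure ν]
    {φ : Y → G → H} {D : Y → G → H' →L[ℝ] K} {γ : H → H'} {L M : Y → ℝ} {Lγ Cγ : ℝ} {u v : G}
    (hLγ : 0 ≤ Lγ) (hγ : ∀ a b, ‖γ a - γ b‖ ≤ Lγ * ‖a - b‖) (hγB : ∀ a, ‖γ a‖ ≤ Cγ)
    (hφ : ∀ y, ‖φ y u - φ y v‖ ≤ L y * ‖u - v‖) (hD : ∀ y, ‖D y u‖ ≤ L y)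
    (hDLip : ∀ y, ‖D y u - D y v‖ ≤ M y * ‖u - v‖) (hL : MemLp L 2 ν) (hM : Integrable M ν)
    (hφu : Integrable (φ · u) ν) (hφv : Integrable (φ · v) ν)
    (hDu : Integrable (D · u) ν) (hDv : Integrable (D · v) ν) :
    ‖(∫ y, D y u ∂ν) (γ (∫ y, φ y u ∂ν)) - (∫ y, D y v ∂ν) (γ (∫ y, φ y v ∂ν))‖ ≤
      ∫ y, (Lγ * L y ^ 2 + Cγ * M y) * ‖u - v‖ ∂ν := by
  set c := ‖u - v‖
  have hL1 : Integrable L ν := hL.integrable one_le_two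
  have hDu_le : ‖∫ y, D y u ∂ν‖ ≤ ∫ y, L y ∂ν := norm_integral_le_of_norm_le hL1 (ae_of_all _ hD)
  have hD_sub : ‖∫ y, D y u ∂ν - ∫ y, D y v ∂ν‖ ≤ (∫ y, M y ∂ν) * c :=
    norm_integral_sub_integral_le hDu hDv hM hDLip
  have hφ_sub : ‖∫ y, φ y u ∂ν - ∫ y, φ y v ∂ν‖ ≤ (∫ y, L y ∂ν) * c :=
    norm_integral_sub_integral_le hφu hφv hL1 hφ
  have hγ_sub := (hγ (∫ y, φ y u ∂ν) (∫ y, φ y v ∂ν)).trans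
    (mul_le_mul_of_nonneg_left hφ_sub hLγ)
  rw [integral_mul_const, integral_add (hL.integrable_sq.const_mul _) (hM.const_mul _),
    integral_const_mul, integral_const_mul]
  calc _ ≤ (∫ y, L y ∂ν) * (Lγ * ((∫ y, L y ∂ν) * c)) + (∫ y, M y ∂ν) * c * Cγ :=
        (ContinuousLinearMap.norm_apply_sub_apply_le _ _ _ _).trans <| add_le_add
          (mul_le_mul hDu_le hγ_sub (norm_nonneg _) ((norm_nonneg _).trans hDu_le))
          (mul_le_mul hD_sub (hγB _) (norm_nonneg _) ((norm_nonneg _).trans hD_sub))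
    _ = (Lγ * (∫ y, L y ∂ν) ^ 2 + Cγ * ∫ y, M y ∂ν) * c := by ring
    _ ≤ (Lγ * ∫ y, L y ^ 2 ∂ν + Cγ * ∫ y, M y ∂ν) * c := by
        gcongr
        exact sq_integral_le_integral_sq hL

end Integral

section CompProd

variable {α β : Type*} [MeasurableSpace α] [MeasurableSpace β] {μ : Measure α} [SFinite μ]
  {κ : Kernel α β} [IsSFiniteKernel κ] {H : Type*} [NormedAddCommGroup H]

lemma MeasureTheory.MemLp.ae_memLp_compProd {h : α × β → H} (hh : MemLp h 2 (μ ⊗ₘ κ)) :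
    ∀ᵐ x ∂μ, MemLp (fun y => h (x, y)) 2 (κ x) := by
  have hsq := (memLp_two_iff_integrable_sq_norm hh.1).1 hh
  filter_upwards [((Measure.integrable_compProd_iff hsq.1).1 hsq).1,
    hh.1.compProd_mk_left] with x hx hmx
  exact (memLp_two_iff_integrable_sq_norm hmx).2 hx

lemma norm_integral_le_integral_compProd [NormedSpace ℝ H] {Φ : α → H} {W : α × β → ℝ}
    (hW : Integrable W (μ ⊗ₘ κ)) (h : ∀ᵐ x ∂μ, ‖Φ x‖ ≤ ∫ y, W (x, y) ∂κ x) :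
    ‖∫ x, Φ x ∂μ‖ ≤ ∫ z, W z ∂(μ ⊗ₘ κ) := by
  rw [Measure.integral_compProd hW]
  exact norm_integral_le_of_norm_le hW.integral_compProd h

end CompProd

theorem statement12_general {nX nY nb nf : ℕ}
    (μ : Measure (E nX)) [IsProbabilityMeasure μ]
    (κ : Kernel (E nX) (E nY)) [IsMarkovKernel κ]
    (f : E nX → E nY → E nb → E nf)
    (hfm : Measurable (fun q : (E nX × E nY) × E nb => f q.1.1 q.1.2 q.2))
    (hfd : ∀ x y, Differentiable ℝ (f x y))
    (hDfm : ∀ β : E nb,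
      AEStronglyMeasurable (fun z : E nX × E nY => tJac (f z.1 z.2) β) (μ ⊗ₘ κ))
    -- Assumption (A1)
    (g : E nf → ℝ) (Lg Ldg : ℝ)
    (hg2 : ContDiff ℝ 2 g)
    (hgB : ∀ u : E nf, ‖gradient g u‖ ≤ Lg)
    (hgH : ∀ u : E nf, ‖fderiv ℝ (gradient g) u‖ ≤ Ldg)
    -- Assumption (A2)
    (Lf Ldf : E nX × E nY → ℝ) (Lbf Lbdf Cf : ℝ)
    (hLfm : Measurable Lf) (hLdfm : Measurable Ldf)
    (hLbdf : 0 < Lbdf)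
    (hfB : ∀ x y (β : E nb), ‖tJac (f x y) β‖ ≤ Lf (x, y))
    (hfLip : ∀ x y (β β' : E nb),
      ‖tJac (f x y) β - tJac (f x y) β'‖ ≤ Ldf (x, y) * ‖β - β'‖)
    (hMomf : ∀ p ∈ ({2, 4} : Set ℕ),
      (Integrable (fun z => Lf z ^ p) (μ ⊗ₘ κ) ∧ ∫ z, Lf z ^ p ∂(μ ⊗ₘ κ) ≤ Lbf ^ p) ∧
      (∀ β : E nb, Integrable (fun z : E nX × E nY => ‖f z.1 z.2 β‖ ^ p) (μ ⊗ₘ κ) ∧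
          ∫ z : E nX × E nY, ‖f z.1 z.2 β‖ ^ p ∂(μ ⊗ₘ κ) ≤ Cf ^ p) ∧
      (Integrable (fun z => Ldf z ^ p) (μ ⊗ₘ κ) ∧ ∫ z, Ldf z ^ p ∂(μ ⊗ₘ κ) ≤ Lbdf ^ p))

    : ∀ u v : E nb,
      ‖∫ x, (DF κ f x u (gradient g (condF κ f x u))
          - DF κ f x v (gradient g (condF κ f x v))) ∂μ‖ ≤
        (Lbf ^ 2 * Ldg + Lg * Lbdf) * ‖u - v‖ := by
  intro u v
  obtain ⟨⟨hLf2, hLf2_le⟩, hfmom, hLdf2, hLdf2_le⟩ := hMomf 2 (by simp)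
  have hLf : MemLp Lf 2 (μ ⊗ₘ κ) := (memLp_two_iff_integrable_sq hLfm.aestronglyMeasurable).2 hLf2
  have hLdf : MemLp Ldf 2 (μ ⊗ₘ κ) :=
    (memLp_two_iff_integrable_sq hLdfm.aestronglyMeasurable).2 hLdf2
  have hf : ∀ β, MemLp (fun z : E nX × E nY => f z.1 z.2 β) 2 (μ ⊗ₘ κ) := fun β =>
    (memLp_two_iff_integrable_sq_norm
      (hfm.comp (measurable_id.prodMk measurable_const)).aestronglyMeasurable).2 (hfmom β).1
  have hLg : 0 ≤ Lg := (norm_nonneg _).trans (hgB 0)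
  have hLdg : 0 ≤ Ldg := (norm_nonneg _).trans (hgH 0)
  have hpt : ∀ᵐ x ∂μ, ‖DF κ f x u (gradient g (condF κ f x u))
      - DF κ f x v (gradient g (condF κ f x v))‖ ≤
        ∫ y, (Ldg * Lf (x, y) ^ 2 + Lg * Ldf (x, y)) * ‖u - v‖ ∂κ x := by
    filter_upwards [hLf.ae_memLp_compProd, hLdf.ae_memLp_compProd, (hf u).ae_memLp_compProd,
      (hf v).ae_memLp_compProd, (hDfm u).compProd_mk_left, (hDfm v).compProd_mk_left]
      with x hLfx hLdfx hfu hfv hDu hDv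
    have hLfx1 := hLfx.integrable one_le_two
    exact norm_integral_apply_sub_integral_apply_le hLdg
      (norm_sub_le_of_norm_fderiv_le (differentiable_gradient_of_contDiff_two hg2) hgH) hgB
      (fun y => norm_sub_le_of_norm_tJac_le (hfd x y) (hfB x y) u v) (fun y => hfB x y u)
      (fun y => hfLip x y u v) hLfx (hLdfx.integrable one_le_two)
      (hfu.integrable one_le_two) (hfv.integrable one_le_two)
      (hLfx1.mono' hDu (ae_of_all _ fun y => hfB x y u))
      (hLfx1.mono' hDv (ae_of_all _ fun y => hfB x y v))
  have hLdf1 := hLdf.integrable one_le_two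
  calc _ ≤ ∫ z, (Ldg * Lf z ^ 2 + Lg * Ldf z) * ‖u - v‖ ∂(μ ⊗ₘ κ) :=
        norm_integral_le_integral_compProd
          (((hLf2.const_mul _).add (hLdf1.const_mul _)).mul_const _) hpt
    _ = (Ldg * ∫ z, Lf z ^ 2 ∂(μ ⊗ₘ κ) + Lg * ∫ z, Ldf z ∂(μ ⊗ₘ κ)) * ‖u - v‖ := by
        rw [integral_mul_const, integral_add (hLf2.const_mul _) (hLdf1.const_mul _),
          integral_const_mul, integral_const_mul]
    _ ≤ (Lbf ^ 2 * Ldg + Lg * Lbdf) * ‖u - v‖ := by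
        rw [mul_comm (Lbf ^ 2)]
        gcongr
        exact integral_le_of_integral_sq_le hLdf hLbdf.le hLdf2_le

/-- first estimate in the Appendix proof of Lemma 4.4 of the paper:
Lipschitz continuity of `∇G`, under (A1) and (A2). -/
theorem statement12 {nX nY nb nf : ℕ}
    (μ : Measure (E nX)) [IsProbabilityMeasure μ]
    (κ : Kernel (E nX) (E nY)) [IsMarkovKernel κ]
    (f : E nX → E nY → E nb → E nf)
    (hfm : Measurable (fun q : (E nX × E nY) × E nb => f q.1.1 q.1.2 q.2))
    (hfd : ∀ x y, Differentiable ℝ (f x y))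
    (hDfm : ∀ β : E nb,
      AEStronglyMeasurable (fun z : E nX × E nY => tJac (f z.1 z.2) β) (μ ⊗ₘ κ))
    -- Assumption (A1)
    (g : E nf → ℝ) (Lg Ldg : ℝ) (hLg : 0 < Lg) (hLdg : 0 < Ldg)
    (hgconv : ConvexOn ℝ Set.univ g) (hg2 : ContDiff ℝ 2 g)
    (hgB : ∀ u : E nf, ‖gradient g u‖ ≤ Lg)
    (hgH : ∀ u : E nf, ‖fderiv ℝ (gradient g) u‖ ≤ Ldg)
    -- Assumption (A2)
    (Lf Ldf : E nX × E nY → ℝ) (Lbf Lbdf Cf : ℝ)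
    (hLfm : Measurable Lf) (hLdfm : Measurable Ldf)
    (hLf0 : ∀ z, 0 ≤ Lf z) (hLdf0 : ∀ z, 0 ≤ Ldf z)
    (hLbf : 0 < Lbf) (hLbdf : 0 < Lbdf) (hCf : 0 < Cf)
    (hfB : ∀ x y (β : E nb), ‖tJac (f x y) β‖ ≤ Lf (x, y))
    (hfLip : ∀ x y (β β' : E nb),
      ‖tJac (f x y) β - tJac (f x y) β'‖ ≤ Ldf (x, y) * ‖β - β'‖)
    (hMomf : ∀ p ∈ ({2, 4} : Set ℕ),
      (Integrable (fun z => Lf z ^ p) (μ ⊗ₘ κ) ∧ ∫ z, Lf z ^ p ∂(μ ⊗ₘ κ) ≤ Lbf ^ p) ∧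
      (∀ β : E nb, Integrable (fun z : E nX × E nY => ‖f z.1 z.2 β‖ ^ p) (μ ⊗ₘ κ) ∧
          ∫ z : E nX × E nY, ‖f z.1 z.2 β‖ ^ p ∂(μ ⊗ₘ κ) ≤ Cf ^ p) ∧
      (Integrable (fun z => Ldf z ^ p) (μ ⊗ₘ κ) ∧ ∫ z, Ldf z ^ p ∂(μ ⊗ₘ κ) ≤ Lbdf ^ p))

    : ∀ u v : E nb,
      ‖∫ x, (DF κ f x u (gradient g (condF κ f x u))
          - DF κ f x v (gradient g (condF κ f x v))) ∂μ‖ ≤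
        (Lbf ^ 2 * Ldg + Lg * Lbdf) * ‖u - v‖ :=
  statement12_general μ κ f hfm hfd hDfm g Lg Ldg hg2 hgB hgH Lf Ldf Lbf Lbdf Cf hLfm hLdfm hLbdf
    hfB hfLip hMomf
end
end

section
/- Let N be a positive integer, α > 0, L > 0, K ≥ 0, and G_min ∈ ℝ. Let w_0, w_1, …, w_N and v_0, v_1, …, v_{N−1} be real numbers such that v_k ≥ 0 for all k, w_N ≥ G_min, and for every k ∈ {0, …, N−1}: w_{k+1} ≤ w_k − τ_k v_k + (L/2) τ_k² K, where τ_k = α/√(k+1). Then Σ_{k=0}^{N−1} τ_k v_k ≤ (L/2) K α² (1 + ln N) + w_0 − G_min, and consequently ( Σ_{k=0}^{N−1} τ_k v_k ) / ( Σ_{k=0}^{N−1} τ_k ) ≤ ( (L/2) K α² (1 + ln N) + w_0 − G_min ) / ( 2 α ( √(N+1) − 1 ) ). -/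
/-!
Summing the descent inequality telescopes `w`, so `∑ τₖ vₖ ≤ w₀ - G_min + (L/2) K ∑ τₖ²`.
With `τₖ = α/√(k+1)` the squared steps form `α²` times a harmonic sum, at most `α² (1 + ln N)`,
while `∑ τₖ` dominates `α` times the telescoping sum of `2(√(k+2) - √(k+1))`, i.e.
`2α(√(N+1) - 1)`.
-/

open Finset

theorem sum_range_le_sub_add_sum_of_le_sub_add {G : Type*} [AddCommGroup G] [PartialOrder G]
    [IsOrderedAddMonoid G] {w a b : ℕ → G} {n : ℕ}
    (h : ∀ k < n, w (k + 1) ≤ w k - a k + b k) :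
    ∑ k ∈ range n, a k ≤ w 0 - w n + ∑ k ∈ range n, b k := by
  rw [← sum_range_sub', ← sum_add_distrib]
  refine sum_le_sum fun k hk => ?_
  have hstep := h k (mem_range.1 hk)
  rw [sub_add_eq_add_sub, le_sub_iff_add_le] at hstep
  rwa [sub_add_eq_add_sub, le_sub_iff_add_le, add_comm]

theorem sum_range_one_div_add_one_le_one_add_log (n : ℕ) :
    ∑ k ∈ range n, 1 / ((k : ℝ) + 1) ≤ 1 + Real.log n := by
  simpa [harmonic] using harmonic_le_one_add_log n

theorem two_mul_sqrt_add_one_sub_sqrt_le_one_div_sqrt {x : ℝ} (hx : 0 < x) :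
    2 * (√(x + 1) - √x) ≤ 1 / √x := by
  have hsx : 0 < √x := Real.sqrt_pos.2 hx
  have hmono : √x ≤ √(x + 1) := Real.sqrt_le_sqrt (by linarith)
  have hconj : (√(x + 1) - √x) * (√(x + 1) + √x) = 1 := by
    linear_combination Real.sq_sqrt (by linarith : 0 ≤ x + 1) - Real.sq_sqrt hx.le
  rw [le_div_iff₀ hsx]
  nlinarith

theorem two_mul_sqrt_add_one_sub_one_le_sum_range_one_div_sqrt (n : ℕ) :
    2 * (√((n : ℝ) + 1) - 1) ≤ ∑ k ∈ range n, 1 / √((k : ℝ) + 1) := by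
  have htel := sum_range_sub (fun k : ℕ => 2 * √((k : ℝ) + 1)) n
  simp only [Nat.cast_zero, zero_add, Real.sqrt_one, mul_one, Nat.cast_add_one] at htel
  rw [mul_sub, mul_one, ← htel]
  refine sum_le_sum fun k _ => ?_
  rw [← mul_sub]
  exact two_mul_sqrt_add_one_sub_sqrt_le_one_div_sqrt (by positivity)

/-- remark after Theorem 4.6 of the paper: `O(ln N / √N)` rate with
the decreasing stepsizes `τ_k = α/√(k+1)`. -/
theorem statement17 (N : ℕ) (hN : 0 < N) (α L K Gmin : ℝ)
    (hα : 0 < α) (hL : 0 < L) (hK : 0 ≤ K)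
    (τ : ℕ → ℝ) (hτ : ∀ k, τ k = α / Real.sqrt ((k : ℝ) + 1))
    (w v : ℕ → ℝ) (hv : ∀ k < N, 0 ≤ v k) (hwN : Gmin ≤ w N)
    (hrec : ∀ k < N, w (k + 1) ≤ w k - τ k * v k + (L / 2) * τ k ^ 2 * K) :
    (∑ k ∈ Finset.range N, τ k * v k ≤
      (L / 2) * K * α ^ 2 * (1 + Real.log (N : ℝ)) + w 0 - Gmin) ∧
    (∑ k ∈ Finset.range N, τ k * v k) / (∑ k ∈ Finset.range N, τ k) ≤
      ((L / 2) * K * α ^ 2 * (1 + Real.log (N : ℝ)) + w 0 - Gmin) /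
        (2 * α * (Real.sqrt ((N : ℝ) + 1) - 1)) := by
  have hτ_sq_sum : ∑ k ∈ range N, τ k ^ 2 = α ^ 2 * ∑ k ∈ range N, 1 / ((k : ℝ) + 1) := by
    rw [mul_sum]
    refine sum_congr rfl fun k _ => ?_
    rw [hτ k, div_pow, Real.sq_sqrt (by positivity), mul_one_div]
  have hτ_sum : ∑ k ∈ range N, τ k = α * ∑ k ∈ range N, 1 / √((k : ℝ) + 1) := by
    rw [mul_sum]
    exact sum_congr rfl fun k _ => by rw [hτ k, mul_one_div]
  have hdescent := sum_range_le_sub_add_sum_of_le_sub_add (b := fun k => L / 2 * τ k ^ 2 * K) hrec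
  simp only [← sum_mul, ← mul_sum] at hdescent
  have hharmonic := sum_range_one_div_add_one_le_one_add_log N
  have hLK : 0 ≤ L / 2 * K := by positivity
  have hbound : ∑ k ∈ range N, τ k * v k ≤ L / 2 * K * α ^ 2 * (1 + Real.log N) + w 0 - Gmin := by
    rw [hτ_sq_sum] at hdescent
    linarith [mul_le_mul_of_nonneg_left hharmonic (mul_nonneg hLK (sq_nonneg α))]
  refine ⟨hbound, div_le_div₀ ?_ hbound ?_ ?_⟩
  · refine le_trans (sum_nonneg fun k hk => mul_nonneg ?_ (hv k (mem_range.1 hk))) hbound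
    rw [hτ k]; positivity
  · have hsqrt : (1 : ℝ) < √((N : ℝ) + 1) := by
      rw [Real.lt_sqrt zero_le_one]
      exact_mod_cast Nat.lt_add_of_pos_left hN
    exact mul_pos (by positivity) (sub_pos.2 hsqrt)
  · rw [hτ_sum, mul_comm 2 α, mul_assoc]
    exact mul_le_mul_of_nonneg_left (two_mul_sqrt_add_one_sub_one_le_sum_range_one_div_sqrt N) hα.le
end
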